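/- arXiv:1011.0107 — 5 statements merged into one kernel-verified Lean document; each statement's English description precedes it below -/
import Mathlib

section
/- For finitely many Bohr sets B⁽¹⁾,…,B⁽ᵏ⁾ in a finite abelian group G, the intersection Bohr set satisfies μ_G((⋀ᵢ B⁽ⁱ⁾)₁) ≥ ∏ᵢ μ_G(B⁽ⁱ⁾_{1/2}), where B_ρ denotes dilation of the width function by ρ and ⋀ is the Bohr set with the union of frequency sets and pointwise minimum of width functions. -/
/-! Write `A i` for the half-width Bohr sets and `n = |G|`. As `t` ranges over `G^ι`, the sets
`⋂ i, (A i - t i)` have total size `n ∏ i, |A i|`, so one of them, `S`, has at least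
`n ∏ i, |A i| / n^|ι|` elements. Differences of elements of `S` lie in `⋂ i, (A i - A i)`, which
therefore has at least `|S|` elements; and `A i - A i` lies in the full-width Bohr set since
`|1 - γ (x - y)| = |γ y - γ x| ≤ |1 - γ x| + |1 - γ y|` for a character `γ`. -/

open Finset

open scoped Pointwise

/-- The Bohr set with frequency set `Γ`, width function `δ`, dilated by `ρ`. -/
def bohr {G : Type} [AddCommGroup G] (Γ : Finset (AddChar G ℂ))
    (δ : AddChar G ℂ → ℝ) (ρ : ℝ) : Set G :=
  {x | ∀ γ ∈ Γ, ‖1 - γ x‖ ≤ min (ρ * δ γ) 2}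

lemma AddChar.norm_one_sub_apply_sub {G : Type*} [AddCommGroup G] [Finite G] (γ : AddChar G ℂ)
    (x y : G) :
    ‖1 - γ (x - y)‖ = ‖γ y - γ x‖ := by
  rw [← one_mul ‖1 - γ (x - y)‖, ← γ.norm_apply y, ← norm_mul, mul_one_sub,
    ← AddChar.map_add_eq_mul, add_sub_cancel]

lemma AddChar.norm_one_sub_apply_le_two {G : Type*} [AddCommGroup G] [Finite G] (γ : AddChar G ℂ)
    (x : G) :
    ‖1 - γ x‖ ≤ 2 := by
  calc ‖1 - γ x‖ ≤ ‖(1 : ℂ)‖ + ‖γ x‖ := norm_sub_le _ _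
    _ = 2 := by rw [norm_one, γ.norm_apply]; norm_num

lemma bohr_sub_bohr_subset {G : Type} [AddCommGroup G] [Finite G] (Γ : Finset (AddChar G ℂ))
    (δ : AddChar G ℂ → ℝ) (ρ σ : ℝ) :
    bohr Γ δ ρ - bohr Γ δ σ ⊆ bohr Γ δ (ρ + σ) := by
  rintro _ ⟨x, hx, y, hy, rfl⟩ γ hγ
  refine le_min ?_ (γ.norm_one_sub_apply_le_two _)
  calc ‖1 - γ (x - y)‖ = ‖γ y - γ x‖ := γ.norm_one_sub_apply_sub x y
    _ ≤ ‖1 - γ y‖ + ‖1 - γ x‖ := by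
      simpa only [norm_sub_rev (γ y)] using norm_sub_le_norm_sub_add_norm_sub (γ y) 1 (γ x)
    _ ≤ σ * δ γ + ρ * δ γ := add_le_add ((hy γ hγ).trans (min_le_left _ _))
      ((hx γ hγ).trans (min_le_left _ _))
    _ = (ρ + σ) * δ γ := by ring

section Averaging

variable {G ι : Type*} [AddCommGroup G] [Fintype G] [DecidableEq G] [Fintype ι] [DecidableEq ι]

lemma Finset.card_filter_forall_add_mem (A : ι → Finset G) (x : G) :
    #{t : ι → G | ∀ i, x + t i ∈ A i} = ∏ i, #(A i) := by
  rw [← Fintype.card_piFinset]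
  refine card_nbij' (fun t i => x + t i) (fun a i => a i - x) ?_ ?_ ?_ ?_ <;>
    intro t <;> simp

lemma Finset.sum_card_common_translates (A : ι → Finset G) :
    ∑ t : ι → G, #{x | ∀ i, x + t i ∈ A i} = Fintype.card G * ∏ i, #(A i) := by
  have := sum_card_bipartiteAbove_eq_sum_card_bipartiteBelow
    (fun x (t : ι → G) => ∀ i, x + t i ∈ A i) (s := univ) (t := univ)
  simp only [bipartiteAbove, bipartiteBelow] at this
  rw [← this]
  simp [card_filter_forall_add_mem]

lemma Finset.exists_card_mul_prod_card_le_card_common_translates (A : ι → Finset G) :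
    ∃ t : ι → G, Fintype.card G * ∏ i, #(A i) ≤
      Fintype.card G ^ Fintype.card ι * #{x | ∀ i, x + t i ∈ A i} := by
  have hsum : ∑ _t : ι → G, Fintype.card G * ∏ i, #(A i) =
      ∑ t : ι → G, Fintype.card G ^ Fintype.card ι * #{x | ∀ i, x + t i ∈ A i} := by
    rw [sum_const, ← mul_sum, sum_card_common_translates, card_univ, Fintype.card_fun,
      smul_eq_mul]
  obtain ⟨t, -, ht⟩ := exists_le_of_sum_le univ_nonempty hsum.le
  exact ⟨t, ht⟩

end Averaging

lemma Set.ncard_common_translates_le_ncard_iInter_sub {G ι : Type*} [AddCommGroup G] [Finite G]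
    (A : ι → Set G) (t : ι → G) :
    {x | ∀ i, x + t i ∈ A i}.ncard ≤ (⋂ i, (A i - A i)).ncard := by
  obtain hS | ⟨y, hy⟩ := Set.eq_empty_or_nonempty {x | ∀ i, x + t i ∈ A i}
  · simp [hS]
  refine ncard_le_ncard_of_injOn (· - y) (fun x hx => mem_iInter.2 fun i => ?_)
    (sub_left_injective.injOn) (toFinite _)
  exact ⟨x + t i, hx i, y + t i, hy i, add_sub_add_right_eq_sub x y (t i)⟩

theorem prod_ncard_div_card_le_ncard_iInter_sub_div_card {G ι : Type*} [AddCommGroup G]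
    [Fintype G] [Fintype ι] (A : ι → Set G) :
    ∏ i, ((A i).ncard / Fintype.card G : ℝ) ≤
      ((⋂ i, (A i - A i)).ncard : ℝ) / Fintype.card G := by
  classical
  obtain ⟨t, ht⟩ := Finset.exists_card_mul_prod_card_le_card_common_translates
    fun i => (A i).toFinset
  have hS : #{x | ∀ i, x + t i ∈ (A i).toFinset} ≤ (⋂ i, (A i - A i)).ncard := by
    rw [← Set.ncard_coe_finset]
    simpa using Set.ncard_common_translates_le_ncard_iInter_sub A t
  have hn : (0 : ℝ) < Fintype.card G := by exact_mod_cast Fintype.card_pos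
  rw [prod_div_distrib, prod_const, card_univ, div_le_div_iff₀ (by positivity) hn]
  simp only [← Set.ncard_eq_toFinset_card'] at ht
  rw [mul_comm, mul_comm (_ : ℝ) (_ ^ _)]
  exact_mod_cast ht.trans (Nat.mul_le_mul_left _ hS)

/-- The meet (union of frequency sets, pointwise minimum of width functions) at dilation 1 is
exactly the intersection of the Bohr sets. -/
theorem bohr_intersection_general (G : Type) [AddCommGroup G] [Fintype G] (k : ℕ)
    (Γ : Fin k → Finset (AddChar G ℂ)) (δ : Fin k → AddChar G ℂ → ℝ) :
    ∏ i, (((bohr (Γ i) (δ i) (1/2)).ncard : ℝ) / Fintype.card G) ≤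
      ((⋂ i, bohr (Γ i) (δ i) 1).ncard : ℝ) / Fintype.card G := by
  refine (prod_ncard_div_card_le_ncard_iInter_sub_div_card _).trans ?_
  gcongr
  · exact Set.toFinite _
  · refine (bohr_sub_bohr_subset _ _ _ _).trans ?_
    norm_num

/-- Intersections of Bohr sets are large: the meet (union of frequency sets, pointwise
minimum of width functions) at dilation 1 is exactly the intersection of the Bohr sets. -/
theorem bohr_intersection (G : Type) [AddCommGroup G] [Fintype G] (k : ℕ)
    (Γ : Fin k → Finset (AddChar G ℂ)) (δ : Fin k → AddChar G ℂ → ℝ)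
    (hδ : ∀ i, ∀ γ ∈ Γ i, 0 < δ i γ ∧ δ i γ ≤ 2) :
    ∏ i, (((bohr (Γ i) (δ i) (1/2)).ncard : ℝ) / Fintype.card G) ≤
      ((⋂ i, bohr (Γ i) (δ i) 1).ncard : ℝ) / Fintype.card G :=
  bohr_intersection_general G k Γ δ
end

section
/- If B is a Bohr set in a finite abelian group G whose frequency set consists of a single character γ and whose width function is constantly 2, then for every η > 0, μ_G(B_η) ≥ (1/π)·min(η, 2). -/
/-!
The character `γ` maps `G` onto a finite subgroup of `ℂˣ`, i.e. onto the group of all `m`-th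
roots of unity for `m` the size of its image, and all fibres of `γ` have the same size. So the
density of the Bohr set in `G` equals the proportion of `m`-th roots of unity `z` with
`‖1 - z‖ ≤ 2η`. Since a chord is shorter than its arc, this proportion is at least that of the
roots `exp (2πij/m)` with `0 ≤ j ≤ mη/π`, which exceeds `η/π`. For `η ≥ 1` the Bohr set is all
of `G` and `min η 2 / π ≤ 2/π < 1`.
-/

open Finset Polynomial

namespace AddChar

section Monoid

variable {G R : Type*} [AddGroup G] [Fintype G] [Monoid R] [DecidableEq R] (γ : AddChar G R)

lemma card_fiber_eq_card_ker (x₀ : G) : #{x | γ x = γ x₀} = #{x | γ x = 1} := by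
  rw [← map_univ_equiv (Equiv.addRight x₀), filter_map, card_map]
  congr 1 with x
  simp [map_add_eq_mul, (γ.val_isUnit x₀).mul_eq_right, Function.comp_def]

lemma card_filter_apply (p : R → Prop) [DecidablePred p] :
    #{x | p (γ x)} = #{z ∈ univ.image γ | p z} * #{x | γ x = 1} := by
  rw [card_eq_sum_card_fiberwise (f := γ) (t := {z ∈ univ.image γ | p z}), ← smul_eq_mul,
    ← sum_const]
  · refine sum_congr rfl fun z hz => ?_
    obtain ⟨⟨x₀, -, rfl⟩, hp⟩ : (∃ x₀ ∈ univ, γ x₀ = z) ∧ p z := by simpa using hz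
    rw [← γ.card_fiber_eq_card_ker x₀, filter_filter]
    congr 1
    exact filter_congr fun x _ => ⟨And.right, fun h => ⟨h ▸ hp, h⟩⟩
  · intro x hx
    simpa using hx

lemma card_filter_apply_div_card (p : R → Prop) [DecidablePred p] :
    (#{x | p (γ x)} : ℝ) / Fintype.card G = #{z ∈ univ.image γ | p z} / #(univ.image γ) := by
  have hG : Fintype.card G = #(univ.image γ) * #{x | γ x = 1} := by
    simpa using γ.card_filter_apply fun _ => True
  have hker : 0 < #{x | γ x = 1} := card_pos.2 ⟨0, by simp⟩
  rw [γ.card_filter_apply p, hG]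
  push_cast
  exact mul_div_mul_right _ _ (by positivity)

/-- Lagrange's theorem for the range of `γ`, a finite subgroup of `Rˣ`. -/
lemma apply_pow_card_image (x : G) : γ x ^ #(univ.image γ) = 1 := by
  let f := γ.toMonoidHom.toHomUnits
  have hcard : Nat.card f.range = #(univ.image γ) := by
    rw [← SetLike.coe_sort_coe, MonoidHom.coe_range, Nat.card_eq_card_toFinset, Set.toFinset_range,
      ← card_image_of_injective _ Units.val_injective, image_image]
    congr 1
    ext z
    simp [f, Multiplicative.exists]
  have := congrArg (fun u : f.range => ((u : Rˣ) : R))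
    (pow_card_eq_one' (x := ⟨f (.ofAdd x), x, rfl⟩))
  rw [hcard] at this
  simpa [f] using this

end Monoid

lemma image_eq_nthRootsFinset {G R : Type*} [AddGroup G] [Fintype G] [CommRing R]
    [IsDomain R] [DecidableEq R] (γ : AddChar G R) :
    univ.image γ = nthRootsFinset #(univ.image γ) (1 : R) := by
  have hpos : 0 < #(univ.image γ) := card_pos.2 (univ_nonempty.image γ)
  refine eq_of_subset_of_card_le (fun z hz => ?_) ?_
  · obtain ⟨x, -, rfl⟩ := mem_image.1 hz
    exact (mem_nthRootsFinset hpos 1).2 (γ.apply_pow_card_image x)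
  · rw [nthRootsFinset_def]
    exact (Multiset.toFinset_card_le _).trans (card_nthRoots _ _)

end AddChar

open Real in
lemma Complex.lt_card_filter_nthRootsFinset_norm_one_sub_le {m : ℕ} (hm : 0 < m) {r : ℝ}
    (hr₀ : 0 ≤ r) (hr : r < 2 * π) :
    m * r / (2 * π) < #{z ∈ nthRootsFinset m (1 : ℂ) | ‖1 - z‖ ≤ r} := by
  have hζ := Complex.isPrimitiveRoot_exp m hm.ne'
  set ζ := Complex.exp (2 * π * Complex.I / m)
  set t := ⌊m * r / (2 * π)⌋₊
  have hm' : (0 : ℝ) < m := Nat.cast_pos.2 hm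
  have ht : (t : ℝ) ≤ m * r / (2 * π) := Nat.floor_le (by positivity)
  have htm : t < m := by
    have : m * r / (2 * π) < m := by rw [div_lt_iff₀ (by positivity)]; nlinarith
    exact_mod_cast ht.trans_lt this
  calc m * r / (2 * π) < t + 1 := Nat.lt_floor_add_one _
    _ = #(range (t + 1)) := by simp
    _ ≤ _ := by
      refine Nat.cast_le.2 <| card_le_card_of_injOn (s := range (t + 1)) (ζ ^ ·)
        (fun j hj => ?_) (fun i hi j hj => hζ.pow_inj
          (by simp only [coe_range, Set.mem_Iio] at hi; omega)
          (by simp only [coe_range, Set.mem_Iio] at hj; omega))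
      have hj : (j : ℝ) ≤ t := by
        simp only [coe_range, Set.mem_Iio, Order.lt_add_one_iff] at hj; exact_mod_cast hj
      simp only [coe_filter, Set.mem_ofPred_eq, mem_nthRootsFinset hm]
      refine ⟨by rw [← pow_mul, mul_comm, pow_mul, hζ.pow_eq_one, one_pow], ?_⟩
      have hζj : ζ ^ j = Complex.exp (Complex.I * ↑(2 * π * j / m)) := by
        rw [← Complex.exp_nat_mul]; push_cast; ring_nf
      rw [hζj, norm_sub_rev]
      refine Real.norm_exp_I_mul_ofReal_sub_one_le.trans ?_
      rw [Real.norm_of_nonneg (by positivity), div_le_iff₀ hm']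
      rw [le_div_iff₀ (by positivity)] at ht
      nlinarith [pi_pos]

/-- Lower bound for the measure of a Bohr set with a single frequency and width `2`. -/
theorem bohr_single_char_lower (G : Type) [AddCommGroup G] [Fintype G]
    (γ : AddChar G ℂ) (η : ℝ) (hη : 0 < η) :
    (1 / Real.pi) * min η 2 ≤
      (({x : G | ‖1 - γ x‖ ≤ min (2 * η) 2}).ncard : ℝ) / Fintype.card G := by
  classical
  rw [Set.ncard_eq_toFinset_card', Set.toFinset_ofPred]
  rcases lt_or_ge η 1 with hη1 | hη1
  · rw [min_eq_left (by linarith), min_eq_left (by linarith),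
      γ.card_filter_apply_div_card (‖1 - ·‖ ≤ 2 * η)]
    have hm : 0 < #(univ.image γ) := card_pos.2 (univ_nonempty.image γ)
    have hcount := Complex.lt_card_filter_nthRootsFinset_norm_one_sub_le hm (r := 2 * η)
      (by positivity) (by linarith [Real.pi_gt_three])
    rw [← γ.image_eq_nthRootsFinset] at hcount
    rw [le_div_iff₀ (by positivity)]
    convert hcount.le using 1
    field_simp
  · have hall (x : G) : ‖1 - γ x‖ ≤ min (2 * η) 2 := by
      have h2 : ‖1 - γ x‖ ≤ 2 := (norm_sub_le _ _).trans (by simp; norm_num)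
      exact le_min (by linarith) h2
    rw [filter_true_of_mem fun x _ => hall x, card_univ, div_self (by positivity)]
    calc 1 / Real.pi * min η 2 ≤ 1 / Real.pi * 2 := by gcongr; exact min_le_right _ _
      _ ≤ 1 := by rw [div_mul_eq_mul_div, div_le_one Real.pi_pos]; linarith [Real.pi_gt_three]
end

section
/- Let B be a regular Bohr set in a finite abelian group G with normalized measure β (the uniform probability measure on B). Then for any κ > 0 and ρ ≤ 1/(C·h(B)) (C the regularity constant), every character γ with |β̂(γ)| ≥ κ satisfies |1−γ(x)| = O(h(B)·ρ/κ) for all x ∈ B_ρ. -/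
/-!
Put `S = ∑_{y ∈ B} γ̄(y)`, so `|S| ≥ κ |B|`. For `x ∈ B_ρ` the translate `B + x` lies in `B_{1+ρ}`,
as does `B`, and summing `γ̄` over `B + x` gives `γ̄(x) S`. Hence `|S| |1 - γ(x)|` is at most the size
of the symmetric difference of `B` and `B + x`, i.e. at most `2 |B_{1+ρ} \ B| ≤ 2 C h(B) ρ |B|` by
regularity, and `|1 - γ(x)| ≤ 2 C h(B) ρ / κ`.
-/

open Finset

lemma Finset.norm_sum_le_card {α E : Type*} [SeminormedAddCommGroup E] {f : α → E}
    (hf : ∀ a, ‖f a‖ ≤ 1) (s : Finset α) : ‖∑ a ∈ s, f a‖ ≤ #s :=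
  (norm_sum_le_of_le s fun a _ => hf a).trans_eq (by simp)

/-- `s \ t` and `t \ s` each have at most `#u - #s` points. -/
lemma Finset.norm_sum_sub_sum_le {α E : Type*} [DecidableEq α] [SeminormedAddCommGroup E]
    {f : α → E} (hf : ∀ a, ‖f a‖ ≤ 1) {s t u : Finset α} (hs : s ⊆ u) (ht : t ⊆ u)
    (hst : #s = #t) : ‖∑ a ∈ s, f a - ∑ a ∈ t, f a‖ ≤ 2 * (#u - #s : ℝ) := by
  have hst_u : #(s \ t) + #t ≤ #u := card_sdiff_add_card s t ▸ card_le_card (union_subset hs ht)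
  have hts_u : #(t \ s) + #s ≤ #u := card_sdiff_add_card t s ▸ card_le_card (union_subset ht hs)
  rw [← sum_sdiff_sub_sum_sdiff]
  calc ‖∑ a ∈ s \ t, f a - ∑ a ∈ t \ s, f a‖
      ≤ #(s \ t) + #(t \ s) :=
        (norm_sub_le _ _).trans (add_le_add (norm_sum_le_card hf _) (norm_sum_le_card hf _))
    _ ≤ 2 * (#u - #s : ℝ) := by
        rw [hst] at hts_u ⊢
        have : ((#(s \ t) + #t : ℕ) : ℝ) ≤ #u := by exact_mod_cast hst_u
        have : ((#(t \ s) + #t : ℕ) : ℝ) ≤ #u := by exact_mod_cast hts_u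
        push_cast at *
        linarith

lemma Set.norm_inv_ncard_mul_sum_indicator {α 𝕜 : Type*} [Fintype α] [RCLike 𝕜]
    (s : Set α) [Fintype s] (f : α → 𝕜) :
    ‖(s.ncard : 𝕜)⁻¹ * ∑ a, s.indicator f a‖ = ‖∑ a ∈ s.toFinset, f a‖ / s.ncard := by
  have h := Finset.sum_indicator_subset f (Finset.subset_univ s.toFinset)
  rw [s.coe_toFinset] at h
  rw [h, norm_mul, norm_inv, RCLike.norm_natCast, inv_mul_eq_div]

namespace AddChar

open ComplexConjugate

variable {G : Type*} [AddCommGroup G] [Finite G] (γ : AddChar G ℂ)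

lemma norm_one_sub_le_two (x : G) : ‖1 - γ x‖ ≤ 2 :=
  (norm_sub_le _ _).trans_eq (by rw [norm_one, norm_apply]; norm_num)

lemma norm_one_sub_map_add_le (x y : G) : ‖1 - γ (x + y)‖ ≤ ‖1 - γ x‖ + ‖1 - γ y‖ :=
  calc ‖1 - γ (x + y)‖ = ‖(1 - γ x) + γ x * (1 - γ y)‖ := by rw [map_add_eq_mul]; ring_nf
    _ ≤ ‖1 - γ x‖ + ‖1 - γ y‖ :=
        (norm_add_le _ _).trans_eq (by rw [norm_mul, norm_apply, one_mul])

lemma norm_sum_conj_mul_norm_one_sub_le [DecidableEq G] {B T : Finset G} {x : G} (hBT : B ⊆ T)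
    (hBxT : ∀ y ∈ B, y + x ∈ T) :
    ‖∑ y ∈ B, conj (γ y)‖ * ‖1 - γ x‖ ≤ 2 * (#T - #B : ℝ) := by
  have htranslate : ∑ y ∈ B.map (addRightEmbedding x), conj (γ y)
      = conj (γ x) * ∑ y ∈ B, conj (γ y) := by
    simp only [sum_map, addRightEmbedding_apply, map_add_eq_mul, map_mul, mul_sum, mul_comm]
  have hmapT : B.map (addRightEmbedding x) ⊆ T := by
    simpa [Finset.subset_iff] using hBxT
  calc ‖∑ y ∈ B, conj (γ y)‖ * ‖1 - γ x‖
      = ‖∑ y ∈ B, conj (γ y) - ∑ y ∈ B.map (addRightEmbedding x), conj (γ y)‖ := by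
        rw [htranslate, ← one_sub_mul, norm_mul, mul_comm, ← Complex.norm_conj (1 - γ x), map_sub,
          map_one]
    _ ≤ 2 * (#T - #B : ℝ) :=
        norm_sum_sub_sum_le (by simp) hBT hmapT (card_map _).symm

end AddChar

section Bohr

variable {G : Type} [AddCommGroup G] {Γ : Finset (AddChar G ℂ)} {δ : AddChar G ℂ → ℝ}

lemma zero_mem_bohr {ρ : ℝ} (h : (bohr Γ δ ρ).Nonempty) : (0 : G) ∈ bohr Γ δ ρ := by
  obtain ⟨x, hx⟩ := h
  intro γ hγ
  rw [AddChar.map_zero_eq_one, sub_self, norm_zero]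
  exact (norm_nonneg _).trans (hx γ hγ)

lemma add_mem_bohr [Finite G] {ρ₁ ρ₂ : ℝ} {x y : G} (hx : x ∈ bohr Γ δ ρ₁) (hy : y ∈ bohr Γ δ ρ₂) :
    x + y ∈ bohr Γ δ (ρ₁ + ρ₂) := fun γ hγ =>
  le_min ((γ.norm_one_sub_map_add_le x y).trans (by
      rw [add_mul]; exact add_le_add ((hx γ hγ).trans (min_le_left _ _))
        ((hy γ hγ).trans (min_le_left _ _))))
    (γ.norm_one_sub_le_two _)

end Bohr

/-- Green-Konyagin: large Fourier coefficients of the normalised measure of a regular Bohr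
set are approximately annihilated on small dilates of the Bohr set. -/
theorem large_fourier_coeff_annihilated :
    ∀ C : ℝ, 0 < C → ∃ D : ℝ, 0 < D ∧
      ∀ (G : Type) [AddCommGroup G] [Fintype G]
        (Γ : Finset (AddChar G ℂ)) (δ : AddChar G ℂ → ℝ),
        (∀ γ ∈ Γ, 0 < δ γ ∧ δ γ ≤ 2) →
        ∀ h : ℝ,
          h = Real.log (((bohr Γ δ 2).ncard : ℝ) / ((bohr Γ δ (1/2)).ncard : ℝ)) →
          -- `B = bohr Γ δ 1` is `C`-regular:
          (∀ η : ℝ, C * h * |η| ≤ 1 →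
            ((bohr Γ δ 1).ncard : ℝ) / (1 + C * h * |η|)
                ≤ ((bohr Γ δ (1 + η)).ncard : ℝ) ∧
              ((bohr Γ δ (1 + η)).ncard : ℝ)
                ≤ (1 + C * h * |η|) * ((bohr Γ δ 1).ncard : ℝ)) →
          ∀ κ ρ : ℝ, 0 < κ → 0 < ρ → C * h * ρ ≤ 1 →
          ∀ γ : AddChar G ℂ,
            κ ≤ ‖(((bohr Γ δ 1).ncard : ℂ)⁻¹ *
                ∑ x : G, (bohr Γ δ 1).indicator (fun y => starRingEnd ℂ (γ y)) x)‖ →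
            ∀ x ∈ bohr Γ δ ρ, ‖1 - γ x‖ ≤ D * h * ρ / κ := by
  intro C hC
  refine ⟨2 * C, by positivity, fun G _ _ Γ δ _ h _ hreg κ ρ hκ hρ _ γ hγ x hx => ?_⟩
  classical
  set B := (bohr Γ δ 1).toFinset
  set T := (bohr Γ δ (1 + ρ)).toFinset
  have hncard : ∀ r, (bohr Γ δ r).ncard = #(bohr Γ δ r).toFinset :=
    fun r => Set.ncard_eq_toFinset_card' _
  rw [Set.norm_inv_ncard_mul_sum_indicator, hncard] at hγ
  have hB : (0 : ℝ) < #B := (Nat.cast_nonneg _).lt_of_ne fun hB => by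
    rw [← hB, div_zero] at hγ
    exact hκ.not_ge hγ
  have hT : (#T : ℝ) ≤ (1 + C * h * ρ) * #B := by
    simpa only [abs_of_pos hρ, hncard] using (hreg ρ (by rwa [abs_of_pos hρ])).2
  have hx₀ : (0 : G) ∈ bohr Γ δ ρ := zero_mem_bohr ⟨x, hx⟩
  have hsum := γ.norm_sum_conj_mul_norm_one_sub_le (B := B) (T := T) (x := x)
    (fun y hy => by simpa [T] using add_mem_bohr (by simpa [B] using hy) hx₀)
    (fun y hy => by simpa [T] using add_mem_bohr (by simpa [B] using hy) hx)
  rw [le_div_iff₀ hB] at hγ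
  have hfinal : ‖1 - γ x‖ * κ * #B ≤ 2 * C * h * ρ * #B :=
    calc ‖1 - γ x‖ * κ * #B
        ≤ ‖∑ y ∈ B, starRingEnd ℂ (γ y)‖ * ‖1 - γ x‖ := by
          rw [mul_assoc, mul_comm]; exact mul_le_mul_of_nonneg_right hγ (norm_nonneg _)
      _ ≤ 2 * (#T - #B) := hsum
      _ ≤ 2 * C * h * ρ * #B := by linarith
  rw [le_div_iff₀ hκ]
  exact le_of_mul_le_mul_right hfinal hB
end

section
/- Let G be a finite abelian group, μ a probability measure on G, and f ∈ L²(μ) with f ≢ 0. Write L_f = ‖f‖_{L²(μ)}/‖f‖_{L¹(μ)}. Then any subset Λ of Spec_ε(f,μ) := {γ ∈ Ĝ : |(f dμ)^(γ)| ≥ ε‖f‖_{L¹(μ)}} that is 1-dissociated with respect to μ has size O(ε⁻² log(2L_f)). -/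
/-!
Let `c γ` be the phase of `(f dμ)^(γ)` and `A = ∑_{γ ∈ Λ} c γ • γ`. Pairing `f` with `A` gives
`ε ‖f‖₁ |Λ| ≤ ∫ |f| |A| dμ`. Since `exp v ≤ (1 + v) exp (v²)` for small `|v|`, the exponential
`exp (s Re (u A))` is dominated pointwise by a Riesz product times `exp (s² |Λ|)`, so
dissociation gives `∫ exp (2t |A|) dμ ≤ 2 exp (K + 16 t² |Λ|)` (combine the four directions
`u = ±1, ±i`). Cauchy–Schwarz bounds `∫ |f| exp (t |A|) dμ` by `‖f‖₂` times the square root of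
that, and Jensen's inequality for the probability `|f| μ / ‖f‖₁` turns this into
`t ε |Λ| ≤ log (‖f‖₂ / ‖f‖₁) + (log 2 + K) / 2 + 8 t² |Λ|`. Take `t = ε / 32`.
-/

open Finset ComplexConjugate

theorem Real.exp_le_one_add_mul_exp_sq {v : ℝ} (hv : |v| ≤ 1 / 7) :
    Real.exp v ≤ (1 + v) * Real.exp (v ^ 2) := by
  obtain ⟨hv₁, hv₂⟩ := abs_le.1 hv
  have hw : |v - v ^ 2| ≤ 1 := abs_le.2 ⟨by nlinarith, by nlinarith⟩
  have htaylor : Real.exp (v - v ^ 2) ≤ 1 + (v - v ^ 2) + 3 / 4 * (v - v ^ 2) ^ 2 := by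
    have := (abs_le.1 (Real.exp_bound hw (n := 2) two_pos)).2
    norm_num [Finset.sum_range_succ, Nat.factorial, sq_abs] at this
    linarith
  calc Real.exp v = Real.exp (v - v ^ 2) * Real.exp (v ^ 2) := by rw [← Real.exp_add]; ring_nf
    _ ≤ (1 + v) * Real.exp (v ^ 2) := by
      gcongr
      have h : 3 / 4 * (1 - v) ^ 2 ≤ 1 := by nlinarith
      nlinarith [mul_le_mul_of_nonneg_left h (sq_nonneg v)]

theorem Real.exp_sum_le_prod_one_add_mul_exp {ι : Type*} (s : Finset ι) {v : ι → ℝ} {r : ℝ}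
    (hr : r ≤ 1 / 7) (hv : ∀ i ∈ s, |v i| ≤ r) :
    Real.exp (∑ i ∈ s, v i) ≤ (∏ i ∈ s, (1 + v i)) * Real.exp (#s * r ^ 2) := by
  have hterm : ∀ i ∈ s, Real.exp (v i) ≤ (1 + v i) * Real.exp (r ^ 2) := fun i hi ↦ by
    have hvi := hv i hi
    calc Real.exp (v i) ≤ (1 + v i) * Real.exp (v i ^ 2) :=
          Real.exp_le_one_add_mul_exp_sq (hvi.trans hr)
      _ ≤ (1 + v i) * Real.exp (r ^ 2) := by
          refine mul_le_mul_of_nonneg_left (Real.exp_le_exp.2 ?_) ?_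
          · exact sq_le_sq' (by linarith [neg_abs_le (v i)]) (le_of_abs_le hvi)
          · linarith [neg_abs_le (v i)]
  calc Real.exp (∑ i ∈ s, v i) = ∏ i ∈ s, Real.exp (v i) := Real.exp_sum _ _
    _ ≤ ∏ i ∈ s, ((1 + v i) * Real.exp (r ^ 2)) :=
        prod_le_prod (fun i _ ↦ (Real.exp_pos _).le) hterm
    _ = (∏ i ∈ s, (1 + v i)) * Real.exp (#s * r ^ 2) := by
        rw [prod_mul_distrib, prod_const, ← Real.exp_nat_mul]

theorem Real.sum_mul_mul_le_sqrt_mul_sqrt {ι : Type*} (s : Finset ι) (a b : ι → ℝ) {w : ι → ℝ}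
    (hw : ∀ i ∈ s, 0 ≤ w i) :
    ∑ i ∈ s, a i * b i * w i ≤ √(∑ i ∈ s, a i ^ 2 * w i) * √(∑ i ∈ s, b i ^ 2 * w i) := by
  have hcs := Real.sum_mul_le_sqrt_mul_sqrt s (fun i ↦ a i * √(w i)) (fun i ↦ b i * √(w i))
  have hsq : ∀ c : ι → ℝ, ∀ i ∈ s, (c i * √(w i)) ^ 2 = c i ^ 2 * w i := fun c i hi ↦ by
    rw [mul_pow, Real.sq_sqrt (hw i hi)]
  have hmul : ∀ i ∈ s, a i * √(w i) * (b i * √(w i)) = a i * b i * w i := fun i hi ↦ by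
    rw [mul_mul_mul_comm, Real.mul_self_sqrt (hw i hi)]
  rwa [sum_congr rfl hmul, sum_congr rfl (hsq a), sum_congr rfl (hsq b)] at hcs

/-- Weighted Jensen for `exp`: sum `a ≤ c - 1 + exp (a - c)` at `c = log (U / W)`. -/
theorem Real.sum_mul_le_mul_log_of_sum_mul_exp_le {ι : Type*} (s : Finset ι) {w a : ι → ℝ}
    {U : ℝ} (hw : ∀ i ∈ s, 0 ≤ w i) (hW : 0 < ∑ i ∈ s, w i) (hU : 0 < U)
    (hexp : ∑ i ∈ s, w i * Real.exp (a i) ≤ U) :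
    ∑ i ∈ s, w i * a i ≤ (∑ i ∈ s, w i) * Real.log (U / ∑ i ∈ s, w i) := by
  set W := ∑ i ∈ s, w i
  set c := Real.log (U / W)
  have hc : Real.exp c = U / W := Real.exp_log (div_pos hU hW)
  have hpt : ∀ i, a i ≤ c - 1 + W / U * Real.exp (a i) := fun i ↦ by
    have := Real.add_one_le_exp (a i - c)
    rw [Real.exp_sub, hc, div_div_eq_mul_div, mul_comm] at this
    rw [div_mul_eq_mul_div]
    linarith
  calc ∑ i ∈ s, w i * a i ≤ ∑ i ∈ s, w i * (c - 1 + W / U * Real.exp (a i)) :=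
        sum_le_sum fun i hi ↦ mul_le_mul_of_nonneg_left (hpt i) (hw i hi)
    _ = (c - 1) * W + W / U * ∑ i ∈ s, w i * Real.exp (a i) := by
        simp only [mul_add, sum_add_distrib, mul_sum, W]
        congr 1 <;> exact sum_congr rfl fun i _ ↦ by ring
    _ ≤ (c - 1) * W + W / U * U := by gcongr
    _ = W * c := by rw [div_mul_cancel₀ _ hU.ne']; ring

theorem Complex.conj_div_norm_mul_self (z : ℂ) : conj (z / ‖z‖) * z = ‖z‖ := by
  rcases eq_or_ne z 0 with rfl | hz
  · simp
  · rw [map_div₀, Complex.conj_ofReal, div_mul_eq_mul_div, Complex.conj_mul', sq,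
      mul_div_cancel_right₀ _ (by exact_mod_cast norm_ne_zero_iff.2 hz)]

theorem Complex.norm_div_norm_self_le_one (z : ℂ) : ‖z / ‖z‖‖ ≤ 1 := by
  rw [norm_div, Complex.norm_real, norm_norm]
  exact div_self_le_one _

theorem Complex.exp_mul_norm_le_sum_exp_re (z : ℂ) {r : ℝ} (hr : 0 ≤ r) :
    Real.exp (r * ‖z‖) ≤ (∑ k : Fin 4, Real.exp (2 * r * (Complex.I ^ (k : ℕ) * z).re)) / 2 := by
  have hI : ∀ a b : ℝ, Real.exp (r * |a|) * Real.exp (r * |b|) ≤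
      (Real.exp (2 * r * a) + Real.exp (2 * r * -a) + Real.exp (2 * r * b) +
        Real.exp (2 * r * -b)) / 2 := fun a b ↦ by
    have habs : ∀ a : ℝ, Real.exp (r * |a|) ^ 2 ≤ Real.exp (2 * r * a) + Real.exp (2 * r * -a) :=
      fun a ↦ by
        rw [← Real.exp_nat_mul, Nat.cast_two, ← mul_assoc]
        rcases abs_cases a with ⟨h, -⟩ | ⟨h, -⟩ <;> rw [h]
        · linarith [Real.exp_pos (2 * r * -a)]
        · linarith [Real.exp_pos (2 * r * a)]
    nlinarith [habs a, habs b, sq_nonneg (Real.exp (r * |a|) - Real.exp (r * |b|))]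
  calc Real.exp (r * ‖z‖) ≤ Real.exp (r * |z.re|) * Real.exp (r * |z.im|) := by
        rw [← Real.exp_add, ← mul_add]
        gcongr
        exact Complex.norm_le_abs_re_add_abs_im z
    _ ≤ _ := hI z.re z.im
    _ = _ := by
        simp only [Fin.sum_univ_four, Fin.val_zero, Fin.val_one, Fin.val_two]
        norm_num [pow_succ, Complex.mul_re]
        ring

section WeightedNorm

variable {α : Type*} [Fintype α]

noncomputable def weightedL1Norm (μ : α → ℝ) (f : α → ℂ) : ℝ := ∑ x, ‖f x‖ * μ x

noncomputable def weightedL2Norm (μ : α → ℝ) (f : α → ℂ) : ℝ := √(∑ x, ‖f x‖ ^ 2 * μ x)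

variable {μ : α → ℝ}

theorem weightedL1Norm_pos (hμ : ∀ x, 0 ≤ μ x) {f : α → ℂ} {x₀ : α} (hμx₀ : μ x₀ ≠ 0)
    (hfx₀ : f x₀ ≠ 0) : 0 < weightedL1Norm μ f :=
  sum_pos' (fun x _ ↦ mul_nonneg (norm_nonneg _) (hμ x))
    ⟨x₀, mem_univ _, mul_pos (norm_pos_iff.2 hfx₀) ((hμ x₀).lt_of_ne' hμx₀)⟩

theorem weightedL1Norm_le_weightedL2Norm (hμ : ∀ x, 0 ≤ μ x) (hμ1 : ∑ x, μ x = 1) (f : α → ℂ) :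
    weightedL1Norm μ f ≤ weightedL2Norm μ f := by
  have := Real.sum_mul_mul_le_sqrt_mul_sqrt univ (fun x ↦ ‖f x‖) (fun _ ↦ 1) fun x _ ↦ hμ x
  simpa [weightedL1Norm, weightedL2Norm, hμ1] using this

end WeightedNorm

section Characters

variable {G : Type*} [AddCommGroup G]

noncomputable def trigPoly (Λ : Finset (AddChar G ℂ)) (c : AddChar G ℂ → ℂ) (x : G) : ℂ :=
  ∑ γ ∈ Λ, c γ * γ x

noncomputable def rieszProduct (Λ : Finset (AddChar G ℂ)) (ω : AddChar G ℂ → ℂ) (x : G) : ℝ :=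
  ∏ γ ∈ Λ, (1 + (ω γ * γ x).re)

theorem trigPoly_const_mul (Λ : Finset (AddChar G ℂ)) (c : AddChar G ℂ → ℂ) (u : ℂ) (x : G) :
    trigPoly Λ (fun γ ↦ u * c γ) x = u * trigPoly Λ c x := by
  simp only [trigPoly, mul_sum, mul_assoc]

variable [Fintype G]

theorem exp_re_trigPoly_le_rieszProduct {Λ : Finset (AddChar G ℂ)} {c : AddChar G ℂ → ℂ}
    (hc : ∀ γ ∈ Λ, ‖c γ‖ ≤ 1) {s : ℝ} (hs₀ : 0 ≤ s) (hs : s ≤ 1 / 7) (x : G) :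
    Real.exp (s * (trigPoly Λ c x).re) ≤
      rieszProduct Λ (fun γ ↦ s * c γ) x * Real.exp (#Λ * s ^ 2) := by
  have hsum : s * (trigPoly Λ c x).re = ∑ γ ∈ Λ, ((s * c γ) * γ x).re := by
    simp only [trigPoly, Complex.re_sum, mul_sum, mul_assoc, Complex.re_ofReal_mul]
  rw [hsum]
  refine Real.exp_sum_le_prod_one_add_mul_exp Λ hs fun γ hγ ↦ ?_
  calc |((s * c γ) * γ x).re| ≤ ‖(s * c γ) * γ x‖ := Complex.abs_re_le_norm _
    _ = s * ‖c γ‖ := by simp [abs_of_nonneg hs₀]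
    _ ≤ s := mul_le_of_le_one_right hs₀ (hc γ hγ)

/-- `(f dμ)^(γ)` -/
noncomputable def weightedFourier (μ : G → ℝ) (f : G → ℂ) (γ : AddChar G ℂ) : ℂ :=
  ∑ x, f x * conj (γ x) * μ x

def IsDissociated (K : ℝ) (μ : G → ℝ) (Λ : Finset (AddChar G ℂ)) : Prop :=
  ∀ ω : AddChar G ℂ → ℂ, (∀ γ ∈ Λ, ‖ω γ‖ ≤ 1) → ∑ x, rieszProduct Λ ω x * μ x ≤ Real.exp K

variable {μ : G → ℝ}

theorem sum_conj_mul_weightedFourier (f : G → ℂ) (Λ : Finset (AddChar G ℂ))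
    (c : AddChar G ℂ → ℂ) :
    ∑ γ ∈ Λ, conj (c γ) * weightedFourier μ f γ = ∑ x, f x * conj (trigPoly Λ c x) * μ x := by
  simp only [weightedFourier, trigPoly, map_sum, map_mul, mul_sum, sum_mul]
  rw [sum_comm]
  exact sum_congr rfl fun x _ ↦ sum_congr rfl fun γ _ ↦ by ring

theorem sum_norm_weightedFourier_le (hμ : ∀ x, 0 ≤ μ x) (f : G → ℂ) (Λ : Finset (AddChar G ℂ)) :
    ∑ γ ∈ Λ, ‖weightedFourier μ f γ‖ ≤ ∑ x, ‖f x‖ *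
      ‖trigPoly Λ (fun γ ↦ weightedFourier μ f γ / ‖weightedFourier μ f γ‖) x‖ * μ x := by
  set A := trigPoly Λ (fun γ ↦ weightedFourier μ f γ / ‖weightedFourier μ f γ‖)
  have hre : ∑ γ ∈ Λ, ‖weightedFourier μ f γ‖ = (∑ x, f x * conj (A x) * μ x).re := by
    rw [← sum_conj_mul_weightedFourier, sum_congr rfl fun γ _ ↦ Complex.conj_div_norm_mul_self _,
      ← Complex.ofReal_sum, Complex.ofReal_re]
  rw [hre, Complex.re_sum]
  refine sum_le_sum fun x _ ↦ ?_
  rw [Complex.re_mul_ofReal]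
  refine mul_le_mul_of_nonneg_right ((Complex.re_le_norm _).trans_eq ?_) (hμ x)
  rw [norm_mul, Complex.norm_conj]

namespace IsDissociated

variable {K : ℝ} {Λ : Finset (AddChar G ℂ)}

theorem sum_exp_re_trigPoly_le (hΛ : IsDissociated K μ Λ) (hμ : ∀ x, 0 ≤ μ x)
    {c : AddChar G ℂ → ℂ} (hc : ∀ γ ∈ Λ, ‖c γ‖ ≤ 1) {s : ℝ} (hs₀ : 0 ≤ s) (hs : s ≤ 1 / 7) :
    ∑ x, Real.exp (s * (trigPoly Λ c x).re) * μ x ≤ Real.exp (K + #Λ * s ^ 2) := by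
  have hω : ∀ γ ∈ Λ, ‖(s : ℂ) * c γ‖ ≤ 1 := fun γ hγ ↦ by
    rw [norm_mul, Complex.norm_real, Real.norm_of_nonneg hs₀]
    nlinarith [hc γ hγ, norm_nonneg (c γ)]
  calc ∑ x, Real.exp (s * (trigPoly Λ c x).re) * μ x
      ≤ ∑ x, rieszProduct Λ (fun γ ↦ s * c γ) x * Real.exp (#Λ * s ^ 2) * μ x :=
        sum_le_sum fun x _ ↦ mul_le_mul_of_nonneg_right
          (exp_re_trigPoly_le_rieszProduct hc hs₀ hs x) (hμ x)
    _ = Real.exp (#Λ * s ^ 2) * ∑ x, rieszProduct Λ (fun γ ↦ s * c γ) x * μ x := by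
        rw [mul_sum]; exact sum_congr rfl fun x _ ↦ by ring
    _ ≤ Real.exp (#Λ * s ^ 2) * Real.exp K := by gcongr; exact hΛ _ hω
    _ = Real.exp (K + #Λ * s ^ 2) := by rw [← Real.exp_add, add_comm]

theorem sum_exp_mul_norm_trigPoly_le (hΛ : IsDissociated K μ Λ) (hμ : ∀ x, 0 ≤ μ x)
    {c : AddChar G ℂ → ℂ} (hc : ∀ γ ∈ Λ, ‖c γ‖ ≤ 1) {r : ℝ} (hr₀ : 0 ≤ r) (hr : r ≤ 1 / 14) :
    ∑ x, Real.exp (r * ‖trigPoly Λ c x‖) * μ x ≤ 2 * Real.exp (K + #Λ * (2 * r) ^ 2) := by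
  set A := trigPoly Λ c
  have hdir : ∀ k : Fin 4, ∑ x, Real.exp (2 * r * (Complex.I ^ (k : ℕ) * A x).re) * μ x ≤
      Real.exp (K + #Λ * (2 * r) ^ 2) := fun k ↦ by
    have := hΛ.sum_exp_re_trigPoly_le hμ (c := fun γ ↦ Complex.I ^ (k : ℕ) * c γ) (s := 2 * r)
      (fun γ hγ ↦ by simpa using hc γ hγ) (by positivity) (by linarith)
    simpa only [trigPoly_const_mul] using this
  calc ∑ x, Real.exp (r * ‖A x‖) * μ x
      ≤ ∑ x, (∑ k : Fin 4, Real.exp (2 * r * (Complex.I ^ (k : ℕ) * A x).re)) / 2 * μ x :=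
        sum_le_sum fun x _ ↦ mul_le_mul_of_nonneg_right
          (Complex.exp_mul_norm_le_sum_exp_re _ hr₀) (hμ x)
    _ = (∑ k : Fin 4, ∑ x, Real.exp (2 * r * (Complex.I ^ (k : ℕ) * A x).re) * μ x) / 2 := by
        simp only [div_mul_eq_mul_div, sum_mul, ← sum_div]; rw [sum_comm]
    _ ≤ (∑ _k : Fin 4, Real.exp (K + #Λ * (2 * r) ^ 2)) / 2 := by gcongr with k; exact hdir k
    _ = 2 * Real.exp (K + #Λ * (2 * r) ^ 2) := by simp; ring

theorem mul_card_le_log (hΛ : IsDissociated K μ Λ) (hμ : ∀ x, 0 ≤ μ x) (hμ1 : ∑ x, μ x = 1)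
    {f : G → ℂ} (hf : 0 < weightedL1Norm μ f) {ε : ℝ}
    (hspec : ∀ γ ∈ Λ, ε * weightedL1Norm μ f ≤ ‖weightedFourier μ f γ‖)
    {t : ℝ} (ht₀ : 0 < t) (ht : t ≤ 1 / 28) :
    t * (ε * #Λ) ≤ Real.log (weightedL2Norm μ f / weightedL1Norm μ f) + (Real.log 2 + K) / 2 +
      8 * t ^ 2 * #Λ := by
  set N₁ := weightedL1Norm μ f
  set N₂ := weightedL2Norm μ f
  set A := trigPoly Λ (fun γ ↦ weightedFourier μ f γ / ‖weightedFourier μ f γ‖)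
  set M := 2 * Real.exp (K + #Λ * (2 * (2 * t)) ^ 2)
  have hN₂ : 0 < N₂ := hf.trans_le (weightedL1Norm_le_weightedL2Norm hμ hμ1 f)
  have hM : 0 < M := by positivity
  have hcorr : ε * #Λ * N₁ ≤ ∑ x, ‖f x‖ * ‖A x‖ * μ x := by
    calc ε * #Λ * N₁ = ∑ _γ ∈ Λ, ε * N₁ := by rw [sum_const, nsmul_eq_mul]; ring
      _ ≤ ∑ γ ∈ Λ, ‖weightedFourier μ f γ‖ := sum_le_sum hspec
      _ ≤ _ := sum_norm_weightedFourier_le hμ f Λ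
  have hmoment : ∑ x, Real.exp (2 * t * ‖A x‖) * μ x ≤ M :=
    hΛ.sum_exp_mul_norm_trigPoly_le hμ (fun γ _ ↦ Complex.norm_div_norm_self_le_one _)
      (by positivity) (by linarith)
  have hexp : ∑ x, ‖f x‖ * μ x * Real.exp (t * ‖A x‖) ≤ N₂ * √M := by
    calc ∑ x, ‖f x‖ * μ x * Real.exp (t * ‖A x‖)
        = ∑ x, ‖f x‖ * Real.exp (t * ‖A x‖) * μ x := sum_congr rfl fun x _ ↦ by ring
      _ ≤ N₂ * √(∑ x, Real.exp (t * ‖A x‖) ^ 2 * μ x) :=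
        Real.sum_mul_mul_le_sqrt_mul_sqrt _ _ _ fun x _ ↦ hμ x
      _ = N₂ * √(∑ x, Real.exp (2 * t * ‖A x‖) * μ x) := by
        simp only [← Real.exp_nat_mul, Nat.cast_ofNat, mul_assoc]
      _ ≤ N₂ * √M := by gcongr
  have hjensen : t * ∑ x, ‖f x‖ * ‖A x‖ * μ x ≤ N₁ * Real.log (N₂ * √M / N₁) := by
    have := Real.sum_mul_le_mul_log_of_sum_mul_exp_le univ
      (fun x _ ↦ mul_nonneg (norm_nonneg (f x)) (hμ x)) hf (by positivity) hexp
    rw [mul_sum]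
    exact (sum_congr rfl fun x _ ↦ by ring).trans_le this
  have hlog : Real.log (N₂ * √M / N₁) =
      Real.log (N₂ / N₁) + (Real.log 2 + K) / 2 + 8 * t ^ 2 * #Λ := by
    rw [mul_div_right_comm, Real.log_mul (div_pos hN₂ hf).ne' (Real.sqrt_pos.2 hM).ne',
      Real.log_sqrt hM.le, Real.log_mul two_ne_zero (Real.exp_pos _).ne', Real.log_exp]
    ring
  rw [← hlog, ← mul_le_mul_iff_of_pos_left hf]
  calc N₁ * (t * (ε * #Λ)) = t * (ε * #Λ * N₁) := by ring
    _ ≤ t * ∑ x, ‖f x‖ * ‖A x‖ * μ x := by gcongr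
    _ ≤ _ := hjensen

end IsDissociated

end Characters

/-- The Chang bound: any `1`-dissociated (w.r.t. `μ`) subset of the `ε`-spectrum of `f`
w.r.t. `μ` has size `O(ε⁻² log (2 L_f))` where `L_f = ‖f‖_{L²(μ)}/‖f‖_{L¹(μ)}`. -/
theorem chang_bound :
    ∃ C : ℝ, 0 < C ∧
      ∀ (G : Type) [AddCommGroup G] [Fintype G] (μ : G → ℝ) (f : G → ℂ) (ε : ℝ),
        (∀ x, 0 ≤ μ x) → ∑ x, μ x = 1 → 0 < ε → ε ≤ 1 →
        (∃ x, μ x ≠ 0 ∧ f x ≠ 0) →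
        ∀ Λ : Finset (AddChar G ℂ),
          -- Λ is contained in Spec_ε(f, μ):
          (∀ γ ∈ Λ, ε * ∑ x, ‖f x‖ * μ x ≤
              ‖∑ x, f x * starRingEnd ℂ (γ x) * μ x‖) →
          -- Λ is 1-dissociated w.r.t. μ:
          (∀ ω : AddChar G ℂ → ℂ, (∀ γ ∈ Λ, ‖ω γ‖ ≤ 1) →
              ∑ x, (∏ γ ∈ Λ, (1 + (ω γ * γ x).re)) * μ x ≤ Real.exp 1) →
          (Λ.card : ℝ) ≤ C * ε⁻¹ ^ 2 *
            Real.log (2 * Real.sqrt (∑ x, ‖f x‖ ^ 2 * μ x) /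
              (∑ x, ‖f x‖ * μ x)) := by
  refine ⟨64, by norm_num, ?_⟩
  intro G _ _ μ f ε hμ hμ1 hε hε1 ⟨x₀, hμx₀, hfx₀⟩ Λ hspec hdiss
  have hΛ : IsDissociated 1 μ Λ := hdiss
  have hN₁ := weightedL1Norm_pos hμ hμx₀ hfx₀
  have hN₁₂ := weightedL1Norm_le_weightedL2Norm hμ hμ1 f
  have hkey := hΛ.mul_card_le_log hμ hμ1 hN₁ hspec (t := ε / 32) (by positivity) (by linarith)
  set L := Real.log (weightedL2Norm μ f / weightedL1Norm μ f)
  have hL : 0 ≤ L := Real.log_nonneg ((one_le_div hN₁).2 hN₁₂)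
  have hlog : Real.log (2 * weightedL2Norm μ f / weightedL1Norm μ f) = Real.log 2 + L := by
    rw [mul_div_assoc, Real.log_mul two_ne_zero (div_pos (hN₁.trans_le hN₁₂) hN₁).ne']
  change (#Λ : ℝ) ≤ 64 * ε⁻¹ ^ 2 * Real.log (2 * weightedL2Norm μ f / weightedL1Norm μ f)
  rw [hlog]
  have hlog2 := Real.log_two_gt_d9
  calc (#Λ : ℝ) = ε⁻¹ ^ 2 * (ε ^ 2 * #Λ) := by field_simp
    _ ≤ ε⁻¹ ^ 2 * (64 * (Real.log 2 + L)) := by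
        refine mul_le_mul_of_nonneg_left ?_ (by positivity)
        -- `hkey` reads `3 ε² |Λ| / 128 ≤ L + (log 2 + 1) / 2`, and `1 < 2 log 2`
        nlinarith
    _ = _ := by ring
end

section
/- Suppose G is an abelian group, X ⊆ G finite, and 2X − X ⊆ Span(T) + X − X for some finite set T of size k. Then |(n+1)X − X| ≤ (2n+1)^k |X − X| for all n ≥ 1. -/
open Finset Pointwise

noncomputable def spanN {G : Type} [AddCommGroup G] [DecidableEq G]
    (T : Finset G) (n : ℕ) : Finset G := by
  classical
  exact Finset.image (fun f : {t // t ∈ T} → ℤ => ∑ t ∈ T.attach, f t • (t : G))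
    (Fintype.piFinset fun _ => Finset.Icc (-(n : ℤ)) (n : ℤ))

lemma spanN_card {G : Type} [AddCommGroup G] [DecidableEq G]
    (T : Finset G) (n : ℕ) : (spanN T n).card ≤ (2 * n + 1) ^ T.card := by
  classical
  unfold spanN
  refine (Finset.card_image_le).trans ?_
  rw [Fintype.card_piFinset]
  have hc : (Finset.Icc (-(n : ℤ)) (n : ℤ)).card = 2 * n + 1 := by
    rw [Int.card_Icc]; omega
  simp [hc, Fintype.card_coe]

lemma spanN_add {G : Type} [AddCommGroup G] [DecidableEq G]
    (T : Finset G) (m n : ℕ) {s s' : G} (hs : s ∈ spanN T m) (hs' : s' ∈ spanN T n) :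
    s + s' ∈ spanN T (m + n) := by
  classical
  unfold spanN at *
  simp only [Finset.mem_image, Fintype.mem_piFinset, Finset.mem_Icc] at *
  obtain ⟨f, hf, rfl⟩ := hs
  obtain ⟨g, hg, rfl⟩ := hs'
  refine ⟨f + g, fun t => ?_, ?_⟩
  · have h1 := hf t; have h2 := hg t
    simp only [Pi.add_apply]
    constructor <;> push_cast <;> omega
  · rw [← Finset.sum_add_distrib]
    refine Finset.sum_congr rfl fun t _ => ?_
    simp [add_smul]

lemma base_cover {G : Type} [AddCommGroup G] [DecidableEq G]
    (X T : Finset G)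
    (h : ((X + X - X : Finset G) : Set G) ⊆
      ({x | ∃ ε : G → ℤ, (∀ t, ε t ∈ ({-1, 0, 1} : Set ℤ)) ∧ x = ∑ t ∈ T, ε t • t}
        + (X : Set G)) - (X : Set G)) :
    ∀ x ∈ X + X - X, ∃ s ∈ spanN T 1, ∃ c ∈ X, ∃ d ∈ X, x = s + c - d := by
  classical
  intro x hx
  have hx' := h (Finset.mem_coe.mpr hx)
  rw [Set.mem_sub] at hx'
  obtain ⟨y, hy, d, hd, rfl⟩ := hx'
  rw [Set.mem_add] at hy
  obtain ⟨s, hs, c, hc, rfl⟩ := hy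
  obtain ⟨ε, hε, rfl⟩ := hs
  refine ⟨∑ t ∈ T, ε t • t, ?_, c, hc, d, hd, by abel⟩
  unfold spanN
  simp only [Finset.mem_image, Fintype.mem_piFinset, Finset.mem_Icc]
  refine ⟨fun t => ε t, fun t => ?_, Finset.sum_attach T fun t => ε t • t⟩
  have := hε t
  simp only [Set.mem_insert_iff, Set.mem_singleton_iff] at this
  change -1 ≤ ε ↑t ∧ ε ↑t ≤ 1
  omega

lemma key_cover {G : Type} [AddCommGroup G] [DecidableEq G]
    (X T : Finset G)
    (hbase : ∀ x ∈ X + X - X, ∃ s ∈ spanN T 1, ∃ c ∈ X, ∃ d ∈ X, x = s + c - d) :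
    ∀ n : ℕ, 1 ≤ n →
      ((∑ _i ∈ Finset.range (n + 1), X) - X : Finset G) ⊆ spanN T n + X - X := by
  classical
  intro n hn
  induction n, hn using Nat.le_induction with
  | base =>
    intro x hx
    have h2 : (∑ _i ∈ Finset.range 2, X) = X + X := by
      rw [Finset.sum_range_succ, Finset.sum_range_one]
    rw [h2] at hx
    obtain ⟨s, hs, c, hc, d, hd, rfl⟩ := hbase x hx
    rw [Finset.mem_sub]
    exact ⟨s + c, Finset.add_mem_add hs hc, d, hd, rfl⟩
  | succ n hn ih =>
    intro x hx
    rw [Finset.mem_sub] at hx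
    obtain ⟨y, hy, b, hb, rfl⟩ := hx
    rw [Finset.sum_range_succ, Finset.mem_add] at hy
    obtain ⟨z, hz, a, ha, rfl⟩ := hy
    have hzb : z - b ∈ (∑ _i ∈ Finset.range (n + 1), X) - X :=
      Finset.sub_mem_sub hz hb
    have := ih hzb
    rw [Finset.mem_sub] at this
    obtain ⟨w, hw, d, hd, hwd⟩ := this
    rw [Finset.mem_add] at hw
    obtain ⟨s, hs, c, hc, rfl⟩ := hw
    have hacd : a + c - d ∈ X + X - X :=
      Finset.sub_mem_sub (Finset.add_mem_add ha hc) hd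
    obtain ⟨s', hs', e, he, f, hf, hef⟩ := hbase _ hacd
    rw [Finset.mem_sub]
    refine ⟨(s + s') + e, Finset.add_mem_add (spanN_add T n 1 hs hs') he, f, hf, ?_⟩
    have : z + a - b = (z - b) + a := by abel
    rw [this, ← hwd]
    have : s + c - d + a = s + (a + c - d) := by abel
    rw [this, hef]
    abel

/-- Polynomial growth from a covering of `2X - X` by `Span(T) + X - X`. -/
theorem growth_from_covering (G : Type) [AddCommGroup G] [DecidableEq G]
    (X T : Finset G) (k : ℕ) (hT : T.card = k)
    (h : ((X + X - X : Finset G) : Set G) ⊆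
      ({x | ∃ ε : G → ℤ, (∀ t, ε t ∈ ({-1, 0, 1} : Set ℤ)) ∧ x = ∑ t ∈ T, ε t • t}
        + (X : Set G)) - (X : Set G)) :
    ∀ n : ℕ, 1 ≤ n →
      (((∑ _i ∈ Finset.range (n + 1), X) - X : Finset G)).card
        ≤ (2 * n + 1) ^ k * (X - X).card := by
  intro n hn
  have hsub := key_cover X T (base_cover X T h) n hn
  have hsub2 : spanN T n + X - X ⊆ spanN T n + (X - X) := by
    intro x hx
    rw [Finset.mem_sub] at hx
    obtain ⟨y, hy, d, hd, rfl⟩ := hx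
    rw [Finset.mem_add] at hy
    obtain ⟨s, hs, c, hc, rfl⟩ := hy
    have : s + c - d = s + (c - d) := by abel
    rw [this, Finset.mem_add]
    exact ⟨s, hs, c - d, Finset.sub_mem_sub hc hd, rfl⟩
  calc ((∑ _i ∈ Finset.range (n + 1), X) - X : Finset G).card
      ≤ (spanN T n + (X - X)).card := Finset.card_le_card (hsub.trans hsub2)
    _ ≤ (spanN T n).card * (X - X).card := Finset.card_add_le
    _ ≤ (2 * n + 1) ^ k * (X - X).card := by
        refine Nat.mul_le_mul_right _ ?_
        rw [← hT]; exact spanN_card T n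
end
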